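/- Let P^(1) and P^(2) be two strictly positive joint distributions over finite-valued variables X1, X2, X3, Y, U that both factorize as P(x1, x2, x3, y, u) = P(u)·P(x3)·P(y|x3, u)·P(x1|u)·P(x2|y, x1), with identical factors P(u), P(x3), P(y|x3,u), P(x2|y,x1) but possibly different mechanisms P^(1)(x1|u) ≠ P^(2)(x1|u). Then the observational marginals satisfy P^(1)(y|x3) = P^(2)(y|x3) and P^(1)(x2|y, x1) = P^(2)(x2|y, x1), and consequently the interventional conditional P(y|x3)·P(x2|y, x1) / Σ_{y'} P(y'|x3)·P(x2|y', x1) computed from observational conditionals is identical under P^(1) and P^(2). In contrast to P(Y|X1, X2, X3), this distribution is stable to shifts in the mechanism of X1. -/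

import Mathlib

/-! The data-generating process of the ADMG over observed variables `{X1, X2, X3, Y}` with
directed edges `X3 → Y`, `Y → X2`, `X1 → X2` and bidirected edge `Y ↔ X1`, the bidirected
edge being realized by a latent variable `U` with `U → X1` and `U → Y`. The variables take
values in the finite types `A1, A2, A3, AY, AU`. -/

noncomputable section

variable {A1 A2 A3 AY AU : Type}
variable [Fintype A1] [Fintype A2] [Fintype A3] [Fintype AY] [Fintype AU]
variable (pU : AU → ℝ) (pX3 : A3 → ℝ) (pY : AY → A3 → AU → ℝ)
variable (pX1 : A1 → AU → ℝ) (pX2 : A2 → AY → A1 → ℝ)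

/-- The observational joint distribution
`P(x1, x2, x3, y) = Σ_u P(u)·P(x3)·P(y|x3,u)·P(x1|u)·P(x2|y,x1)`. -/
def joint (x1 : A1) (x2 : A2) (x3 : A3) (y : AY) : ℝ :=
  ∑ u : AU, pU u * pX3 x3 * pY y x3 u * pX1 x1 u * pX2 x2 y x1

/-- The post-intervention distribution
`P_{x1}(x2, x3, y) = Σ_u P(u)·P(x3)·P(y|x3,u)·P(x2|y,x1)` (the factor `P(x1|u)` deleted). -/
def postInt (x1 : A1) (x2 : A2) (x3 : A3) (y : AY) : ℝ :=
  ∑ u : AU, pU u * pX3 x3 * pY y x3 u * pX2 x2 y x1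

/-- The observational conditional `P(y | x3)` computed from the joint. -/
def obsYgivenX3 (x3 : A3) (y : AY) : ℝ :=
  (∑ x1 : A1, ∑ x2 : A2, joint pU pX3 pY pX1 pX2 x1 x2 x3 y) /
    (∑ x1 : A1, ∑ x2 : A2, ∑ y' : AY, joint pU pX3 pY pX1 pX2 x1 x2 x3 y')

/-- The observational conditional `P(x2 | y, x1)` computed from the joint. -/
def obsX2givenYX1 (x2 : A2) (y : AY) (x1 : A1) : ℝ :=
  (∑ x3 : A3, joint pU pX3 pY pX1 pX2 x1 x2 x3 y) /
    (∑ x3 : A3, ∑ x2' : A2, joint pU pX3 pY pX1 pX2 x1 x2' x3 y)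

end

/-! Summing out `x2` and then `x1` uses only that `P(x2|y,x1)` and `P(x1|u)` are normalized, so
`P(y|x3) = Σ_u P(u)·P(y|x3,u) / Σ_u P(u)` whatever `P(x1|u)` is. For fixed `(y, x1)` the joint is
`c(x3) · P(x2|y,x1)`, where only `c` depends on `P(x1|u)`, so conditioning on `(y, x1)` returns
`P(x2|y,x1)` itself as soon as the normalizer `Σ_x3 c(x3)` is nonzero, which positivity ensures. -/

section MarginalsOfJoint

variable {A1 A2 A3 AY AU : Type}
variable (pU : AU → ℝ) (pX3 : A3 → ℝ) (pY : AY → A3 → AU → ℝ)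
variable (pX1 : A1 → AU → ℝ) (pX2 : A2 → AY → A1 → ℝ)

lemma joint_eq_mul [Fintype AU] (x1 : A1) (x2 : A2) (x3 : A3) (y : AY) :
    joint pU pX3 pY pX1 pX2 x1 x2 x3 y =
      (∑ u, pU u * pX3 x3 * pY y x3 u * pX1 x1 u) * pX2 x2 y x1 :=
  (Finset.sum_mul ..).symm

lemma sum_joint_x2 [Fintype A2] [Fintype AU] (hX2 : ∀ y x1, ∑ x2, pX2 x2 y x1 = 1)
    (x1 : A1) (x3 : A3) (y : AY) :
    ∑ x2, joint pU pX3 pY pX1 pX2 x1 x2 x3 y =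
      ∑ u, pU u * pX3 x3 * pY y x3 u * pX1 x1 u := by
  simp only [joint_eq_mul, ← Finset.mul_sum, hX2, mul_one]

lemma sum_joint_x1_x2 [Fintype A1] [Fintype A2] [Fintype AU]
    (hX1 : ∀ u, ∑ x1, pX1 x1 u = 1) (hX2 : ∀ y x1, ∑ x2, pX2 x2 y x1 = 1)
    (x3 : A3) (y : AY) :
    ∑ x1, ∑ x2, joint pU pX3 pY pX1 pX2 x1 x2 x3 y = ∑ u, pU u * pX3 x3 * pY y x3 u := by
  simp only [sum_joint_x2 pU pX3 pY pX1 pX2 hX2]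
  rw [Finset.sum_comm]
  simp only [← Finset.mul_sum, hX1, mul_one]

lemma obsYgivenX3_eq [Fintype A1] [Fintype A2] [Fintype AY] [Fintype AU]
    (hY : ∀ x3 u, ∑ y, pY y x3 u = 1) (hX1 : ∀ u, ∑ x1, pX1 x1 u = 1)
    (hX2 : ∀ y x1, ∑ x2, pX2 x2 y x1 = 1) (x3 : A3) (y : AY) :
    obsYgivenX3 pU pX3 pY pX1 pX2 x3 y =
      (∑ u, pU u * pX3 x3 * pY y x3 u) / ∑ u, pU u * pX3 x3 := by
  have hden :
      ∑ x1, ∑ x2, ∑ y', joint pU pX3 pY pX1 pX2 x1 x2 x3 y' = ∑ u, pU u * pX3 x3 :=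
    calc ∑ x1, ∑ x2, ∑ y', joint pU pX3 pY pX1 pX2 x1 x2 x3 y'
        = ∑ y', ∑ x1, ∑ x2, joint pU pX3 pY pX1 pX2 x1 x2 x3 y' := by
          simp only [Finset.sum_comm (γ := A2) (α := AY)]
          exact Finset.sum_comm
      _ = ∑ u, ∑ y', pU u * pX3 x3 * pY y' x3 u := by
          simp only [sum_joint_x1_x2 pU pX3 pY pX1 pX2 hX1 hX2]
          exact Finset.sum_comm
      _ = ∑ u, pU u * pX3 x3 := by simp only [← Finset.mul_sum, hY, mul_one]
  rw [obsYgivenX3, hden, sum_joint_x1_x2 pU pX3 pY pX1 pX2 hX1 hX2]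

lemma obsX2givenYX1_eq [Fintype A2] [Fintype A3] [Fintype AU] [Nonempty A3]
    (hX2 : ∀ y x1, ∑ x2, pX2 x2 y x1 = 1)
    (hpos : ∀ x1 x2 x3 y, 0 < joint pU pX3 pY pX1 pX2 x1 x2 x3 y) (x2 : A2) (y : AY) (x1 : A1) :
    obsX2givenYX1 pU pX3 pY pX1 pX2 x2 y x1 = pX2 x2 y x1 := by
  set c := ∑ x3, ∑ u, pU u * pX3 x3 * pY y x3 u * pX1 x1 u
  have hnum : ∑ x3, joint pU pX3 pY pX1 pX2 x1 x2 x3 y = c * pX2 x2 y x1 := by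
    simp only [joint_eq_mul, c, Finset.sum_mul]
  have hden : ∑ x3, ∑ x2', joint pU pX3 pY pX1 pX2 x1 x2' x3 y = c := by
    simp only [sum_joint_x2 pU pX3 pY pX1 pX2 hX2, c]
  have hc : 0 < c := by
    have : Nonempty A2 := ⟨x2⟩
    rw [← hden]
    exact Finset.sum_pos (fun x3 _ => Finset.sum_pos (fun x2' _ => hpos _ _ _ _)
      Finset.univ_nonempty) Finset.univ_nonempty
  rw [obsX2givenYX1, hnum, hden, mul_div_cancel_left₀ _ hc.ne']

end MarginalsOfJoint

theorem cidp_functional_stable_to_x1_mechanism_shift_general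
    {A1 A2 A3 AY AU : Type}
    [Fintype A1] [Fintype A2] [Fintype A3] [Fintype AY] [Fintype AU]
    (pU : AU → ℝ) (pX3 : A3 → ℝ) (pY : AY → A3 → AU → ℝ)
    (pX1a pX1b : A1 → AU → ℝ) (pX2 : A2 → AY → A1 → ℝ)
    (hY : ∀ x3 u, ∑ y, pY y x3 u = 1)
    (hX1a : ∀ u, ∑ x1, pX1a x1 u = 1) (hX1b : ∀ u, ∑ x1, pX1b x1 u = 1)
    (hX2 : ∀ y x1, ∑ x2, pX2 x2 y x1 = 1)
    (hposa : ∀ x1 x2 x3 y, 0 < joint pU pX3 pY pX1a pX2 x1 x2 x3 y)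
    (hposb : ∀ x1 x2 x3 y, 0 < joint pU pX3 pY pX1b pX2 x1 x2 x3 y) :
    (∀ x3 y, obsYgivenX3 pU pX3 pY pX1a pX2 x3 y = obsYgivenX3 pU pX3 pY pX1b pX2 x3 y) ∧
    (∀ x2 y x1, obsX2givenYX1 pU pX3 pY pX1a pX2 x2 y x1 =
      obsX2givenYX1 pU pX3 pY pX1b pX2 x2 y x1) ∧
    (∀ x1 x2 x3 y,
      obsYgivenX3 pU pX3 pY pX1a pX2 x3 y * obsX2givenYX1 pU pX3 pY pX1a pX2 x2 y x1 /
          (∑ y' : AY, obsYgivenX3 pU pX3 pY pX1a pX2 x3 y' *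
            obsX2givenYX1 pU pX3 pY pX1a pX2 x2 y' x1) =
        obsYgivenX3 pU pX3 pY pX1b pX2 x3 y * obsX2givenYX1 pU pX3 pY pX1b pX2 x2 y x1 /
          (∑ y' : AY, obsYgivenX3 pU pX3 pY pX1b pX2 x3 y' *
            obsX2givenYX1 pU pX3 pY pX1b pX2 x2 y' x1)) := by
  have hY3 : ∀ x3 y, obsYgivenX3 pU pX3 pY pX1a pX2 x3 y = obsYgivenX3 pU pX3 pY pX1b pX2 x3 y :=
    fun x3 y => by
      rw [obsYgivenX3_eq pU pX3 pY pX1a pX2 hY hX1a hX2,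
        obsYgivenX3_eq pU pX3 pY pX1b pX2 hY hX1b hX2]
  have hX2YX1 : ∀ x2 y x1, obsX2givenYX1 pU pX3 pY pX1a pX2 x2 y x1 =
      obsX2givenYX1 pU pX3 pY pX1b pX2 x2 y x1 := by
    rcases isEmpty_or_nonempty A3 with _ | _
    · simp [obsX2givenYX1]
    · intro x2 y x1
      rw [obsX2givenYX1_eq pU pX3 pY pX1a pX2 hX2 hposa,
        obsX2givenYX1_eq pU pX3 pY pX1b pX2 hX2 hposb]
  exact ⟨hY3, hX2YX1, fun x1 x2 x3 y => by simp only [hY3, hX2YX1]⟩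

/-- Let `P⁽¹⁾` and `P⁽²⁾` be two strictly positive joint distributions on
finite-valued `X1, X2, X3, Y, U`, both factorizing as
`P(x1,x2,x3,y,u) = P(u)·P(x3)·P(y|x3,u)·P(x1|u)·P(x2|y,x1)` with identical factors
`P(u), P(x3), P(y|x3,u), P(x2|y,x1)` but possibly different mechanisms
`P⁽¹⁾(x1|u) ≠ P⁽²⁾(x1|u)`. Then the observational marginals satisfy
`P⁽¹⁾(y|x3) = P⁽²⁾(y|x3)` and `P⁽¹⁾(x2|y,x1) = P⁽²⁾(x2|y,x1)`, and consequently the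
interventional conditional `P(y|x3)·P(x2|y,x1) / Σ_{y'} P(y'|x3)·P(x2|y',x1)` computed from
the observational conditionals is identical under `P⁽¹⁾` and `P⁽²⁾`: it is stable to shifts
in the mechanism of `X1`. -/
theorem cidp_functional_stable_to_x1_mechanism_shift
    {A1 A2 A3 AY AU : Type}
    [Fintype A1] [Fintype A2] [Fintype A3] [Fintype AY] [Fintype AU]
    (pU : AU → ℝ) (pX3 : A3 → ℝ) (pY : AY → A3 → AU → ℝ)
    (pX1a pX1b : A1 → AU → ℝ) (pX2 : A2 → AY → A1 → ℝ)
    (hU : ∑ u, pU u = 1) (hX3 : ∑ x3, pX3 x3 = 1)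
    (hY : ∀ x3 u, ∑ y, pY y x3 u = 1)
    (hX1a : ∀ u, ∑ x1, pX1a x1 u = 1) (hX1b : ∀ u, ∑ x1, pX1b x1 u = 1)
    (hX2 : ∀ y x1, ∑ x2, pX2 x2 y x1 = 1)
    (hUpos : ∀ u, 0 ≤ pU u) (hX3pos : ∀ x3, 0 ≤ pX3 x3)
    (hYpos : ∀ y x3 u, 0 ≤ pY y x3 u)
    (hX1apos : ∀ x1 u, 0 ≤ pX1a x1 u) (hX1bpos : ∀ x1 u, 0 ≤ pX1b x1 u)
    (hX2pos : ∀ x2 y x1, 0 ≤ pX2 x2 y x1)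
    (hposa : ∀ x1 x2 x3 y, 0 < joint pU pX3 pY pX1a pX2 x1 x2 x3 y)
    (hposb : ∀ x1 x2 x3 y, 0 < joint pU pX3 pY pX1b pX2 x1 x2 x3 y) :
    (∀ x3 y, obsYgivenX3 pU pX3 pY pX1a pX2 x3 y = obsYgivenX3 pU pX3 pY pX1b pX2 x3 y) ∧
    (∀ x2 y x1, obsX2givenYX1 pU pX3 pY pX1a pX2 x2 y x1 =
      obsX2givenYX1 pU pX3 pY pX1b pX2 x2 y x1) ∧
    (∀ x1 x2 x3 y,
      obsYgivenX3 pU pX3 pY pX1a pX2 x3 y * obsX2givenYX1 pU pX3 pY pX1a pX2 x2 y x1 /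
          (∑ y' : AY, obsYgivenX3 pU pX3 pY pX1a pX2 x3 y' *
            obsX2givenYX1 pU pX3 pY pX1a pX2 x2 y' x1) =
        obsYgivenX3 pU pX3 pY pX1b pX2 x3 y * obsX2givenYX1 pU pX3 pY pX1b pX2 x2 y x1 /
          (∑ y' : AY, obsYgivenX3 pU pX3 pY pX1b pX2 x3 y' *
            obsX2givenYX1 pU pX3 pY pX1b pX2 x2 y' x1)) :=
  cidp_functional_stable_to_x1_mechanism_shift_general pU pX3 pY pX1a pX1b pX2 hY hX1a hX1b hX2
    hposa hposb
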